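/- Fix n ∈ ℕ and q ∈ (0,∞). Suppose that ‖·‖_U and ‖·‖_V are two norms on ℝ^n, with unit balls B_U and B_V, respectively. Then ((1/|B_U|)∫_{B_U} ‖u‖_V^q du)^{1/q} ≥ (n/(n+q))^{1/q}·(|B_U|/|B_V|)^{1/n}. -/

import Mathlib

open MeasureTheory Metric Set ENNReal
open scoped Pointwise

noncomputable section

/-!
Write `A = |B_U|`, `B = |B_V|` and choose `s > 0` with `B sⁿ = A`. Since `{‖·‖_V ≤ t} = t B_V`,
the set of `u ∈ B_U` with `‖u‖_V > t` has measure at least `A - B tⁿ`, which is nonnegative for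
`t ≤ s`. Truncating the layer cake formula
`∫_{B_U} ‖u‖_V^q = q ∫_0^∞ t^(q-1) |{u ∈ B_U | ‖u‖_V > t}| dt` at `s` gives
`∫_{B_U} ‖u‖_V^q ≥ q ∫_0^s t^(q-1) (A - B tⁿ) dt = A s^q n / (n + q)`, which is the claim after
dividing by `A` and taking `q`-th roots.
-/

def IsNorm {V : Type*} [AddCommGroup V] [Module ℝ V] (N : V → ℝ) : Prop :=
  (∀ x, N x = 0 → x = 0) ∧ (∀ (a : ℝ) (x : V), N (a • x) = |a| * N x) ∧
    (∀ x y : V, N (x + y) ≤ N x + N y)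

theorem mul_rpow_mul_le_integral_rpow_of_le_measure_lt {α : Type*} [MeasurableSpace α]
    {μ : Measure α} {f : α → ℝ} {q : ℝ} (hf0 : 0 ≤ᵐ[μ] f) (hf : AEMeasurable f μ)
    (hfq : Integrable (fun x => f x ^ q) μ) {n : ℕ}
    {a b s : ℝ} (hq : 0 < q) (hb : 0 ≤ b) (hs : 0 ≤ s) (hab : b * s ^ n = a)
    (hμ : ∀ t ∈ Ioc 0 s, ENNReal.ofReal (a - b * t ^ n) ≤ μ {x | t < f x}) :
    a * s ^ q * (n / (n + q)) ≤ ∫ x, f x ^ q ∂μ := by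
  have hfq0 : 0 ≤ᵐ[μ] fun x => f x ^ q := hf0.mono fun x hx => Real.rpow_nonneg hx q
  rw [← ENNReal.ofReal_le_ofReal_iff (integral_nonneg_of_ae hfq0),
    ofReal_integral_eq_lintegral_ofReal hfq hfq0]
  have hnq : (0 : ℝ) < n + q := by positivity
  have hle : ∀ t ∈ Ioc 0 s, b * t ^ n ≤ a := fun t ht => by
    rw [← hab]
    gcongr
    exacts [ht.1.le, ht.2]
  set g : ℝ → ℝ := fun t => a * t ^ (q - 1) - b * t ^ ((n : ℝ) + q - 1)
  have hg : ∀ t ∈ Ioc 0 s, g t = (a - b * t ^ n) * t ^ (q - 1) := fun t ht => by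
    have : t ^ ((n : ℝ) + q - 1) = t ^ n * t ^ (q - 1) := by
      rw [add_sub_assoc, Real.rpow_add ht.1, Real.rpow_natCast]
    simp only [g, this]
    ring
  have hg0 : ∀ t ∈ Ioc 0 s, 0 ≤ g t := fun t ht => by
    rw [hg t ht]
    exact mul_nonneg (sub_nonneg.mpr (hle t ht)) (Real.rpow_nonneg ht.1.le _)
  have hi₁ := (intervalIntegral.intervalIntegrable_rpow' (a := 0) (b := s)
    (r := q - 1) (by linarith)).const_mul a
  have hi₂ := (intervalIntegral.intervalIntegrable_rpow' (a := 0) (b := s)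
    (r := n + q - 1) (by linarith)).const_mul b
  have hint : ∫ t in 0..s, g t = a * s ^ q * (n / (n + q)) / q := by
    rw [intervalIntegral.integral_sub hi₁ hi₂, intervalIntegral.integral_const_mul,
      intervalIntegral.integral_const_mul, integral_rpow (Or.inl (by linarith)),
      integral_rpow (Or.inl (by linarith)), sub_add_cancel, sub_add_cancel,
      Real.zero_rpow hq.ne', Real.zero_rpow hnq.ne', Real.rpow_add' hs hnq.ne',
      Real.rpow_natCast, ← hab]
    field_simp
    ring
  calc ENNReal.ofReal (a * s ^ q * (n / (n + q)))
      = ENNReal.ofReal q * ∫⁻ t in Ioc 0 s, ENNReal.ofReal (g t) := by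
        rw [← ofReal_integral_eq_lintegral_ofReal (hi₁.sub hi₂).1
          ((ae_restrict_iff' measurableSet_Ioc).mpr (.of_forall hg0)),
          ← intervalIntegral.integral_of_le hs, hint, ← ENNReal.ofReal_mul hq.le,
          mul_div_cancel₀ _ hq.ne']
    _ ≤ ENNReal.ofReal q * ∫⁻ t in Ioc 0 s, μ {x | t < f x} * ENNReal.ofReal (t ^ (q - 1)) := by
        gcongr ENNReal.ofReal q * ?_
        refine setLIntegral_mono' measurableSet_Ioc fun t ht => ?_
        rw [hg t ht, ENNReal.ofReal_mul (sub_nonneg.mpr (hle t ht))]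
        gcongr
        exact hμ t ht
    _ ≤ ENNReal.ofReal q * ∫⁻ t in Ioi 0, μ {x | t < f x} * ENNReal.ofReal (t ^ (q - 1)) := by
        gcongr ENNReal.ofReal q * ?_
        exact lintegral_mono_set Ioc_subset_Ioi_self
    _ = ∫⁻ x, ENNReal.ofReal (f x ^ q) ∂μ :=
        (lintegral_rpow_eq_lintegral_meas_lt_mul μ hf0 hf hq).symm

namespace IsNorm

section Module

variable {V : Type*} [AddCommGroup V] [Module ℝ V] {N : V → ℝ}

def toSeminorm (h : IsNorm N) : Seminorm ℝ V :=
  Seminorm.of N h.2.2 fun a x => by rw [h.2.1, Real.norm_eq_abs]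

@[simp]
lemma coe_toSeminorm (h : IsNorm N) : ⇑h.toSeminorm = N := rfl

lemma nonneg (h : IsNorm N) (x : V) : 0 ≤ N x :=
  apply_nonneg h.toSeminorm x

lemma sublevel_eq_smul (h : IsNorm N) {t : ℝ} (ht : 0 < t) :
    {x | N x ≤ t} = t • {x | N x ≤ 1} := by
  have := Seminorm.smul_closedBall_zero (p := h.toSeminorm) (r := 1)
    (by rwa [Real.norm_of_nonneg ht.le])
  simpa [Seminorm.closedBall_zero_eq, Real.norm_of_nonneg ht.le] using this.symm

end Module

section FiniteDimensional

variable {E : Type*} [NormedAddCommGroup E] [NormedSpace ℝ E] [FiniteDimensional ℝ E]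
  {N : E → ℝ}

protected lemma continuous (h : IsNorm N) : Continuous N := by
  simpa using h.toSeminorm.convexOn.continuousOn isOpen_univ

lemma exists_pos_mul_norm_le (h : IsNorm N) : ∃ m > 0, ∀ x, m * ‖x‖ ≤ N x := by
  have hpos : ∀ x ∈ sphere (0 : E) 1, 0 < N x := fun x hx =>
    (h.nonneg x).lt_of_ne fun h0 => by simp [h.1 x h0.symm] at hx
  obtain ⟨m, hm, hmN⟩ :=
    (isCompact_sphere (0 : E) 1).exists_forall_le' h.continuous.continuousOn hpos
  refine ⟨m, hm, fun x => ?_⟩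
  rcases eq_or_ne x 0 with rfl | hx
  · simpa using h.nonneg 0
  have hx' : 0 < ‖x‖ := norm_pos_iff.mpr hx
  have hunit : ‖x‖⁻¹ • x ∈ sphere (0 : E) 1 := by
    simp [norm_smul, hx'.ne']
  calc m * ‖x‖ ≤ N (‖x‖⁻¹ • x) * ‖x‖ := by gcongr; exact hmN _ hunit
    _ = N x := by
      rw [h.2.1, abs_of_pos (inv_pos.mpr hx')]
      field_simp

lemma isCompact_sublevel (h : IsNorm N) (r : ℝ) : IsCompact {x | N x ≤ r} := by
  obtain ⟨m, hm, hmN⟩ := h.exists_pos_mul_norm_le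
  refine isCompact_of_isClosed_isBounded (isClosed_le h.continuous continuous_const)
    ((isBounded_closedBall (x := 0) (r := r / m)).subset fun x hx => ?_)
  rw [mem_closedBall_zero_iff, le_div_iff₀' hm]
  exact (hmN x).trans hx

variable [MeasurableSpace E] (μ : Measure E) [μ.IsAddHaarMeasure]

lemma measureReal_sublevel_pos (h : IsNorm N) {r : ℝ} (hr : 0 < r) :
    0 < μ.real {x | N x ≤ r} := by
  have hpos : 0 < μ {x | N x ≤ r} := by
    refine (IsOpen.measure_pos μ (isOpen_lt h.continuous continuous_const) ⟨0, ?_⟩).trans_le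
      (measure_mono fun x (hx : N x < r) => hx.le)
    show N 0 < r
    rw [← h.coe_toSeminorm, map_zero]
    exact hr
  exact ENNReal.toReal_pos hpos.ne' (h.isCompact_sublevel r).measure_lt_top.ne

variable [BorelSpace E]

lemma measure_sublevel (h : IsNorm N) {t : ℝ} (ht : 0 < t) :
    μ {x | N x ≤ t} = ENNReal.ofReal (t ^ Module.finrank ℝ E) * μ {x | N x ≤ 1} := by
  rw [h.sublevel_eq_smul ht, Measure.addHaar_smul_of_nonneg μ ht.le]

lemma ofReal_sub_le_restrict_measure_lt {NU NV : E → ℝ} (hU : IsNorm NU) (hV : IsNorm NV)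
    {t : ℝ} (ht : 0 < t) :
    ENNReal.ofReal (μ.real {x | NU x ≤ 1} - μ.real {x | NV x ≤ 1} * t ^ Module.finrank ℝ E)
      ≤ μ.restrict {x | NU x ≤ 1} {x | t < NV x} := by
  have htd : 0 ≤ t ^ Module.finrank ℝ E := by positivity
  rw [Measure.restrict_apply (measurableSet_lt measurable_const hV.continuous.measurable),
    ENNReal.ofReal_sub _ (by positivity), mul_comm, ENNReal.ofReal_mul htd,
    ofReal_measureReal (hU.isCompact_sublevel 1).measure_lt_top.ne,
    ofReal_measureReal (hV.isCompact_sublevel 1).measure_lt_top.ne, ← hV.measure_sublevel μ ht]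
  refine le_measure_sdiff.trans_eq (congrArg μ ?_)
  ext x
  simp [and_comm]

end FiniteDimensional

end IsNorm

/-- **Lemma (volumetric lower bound).** For any two norms `‖·‖_U, ‖·‖_V` on `ℝⁿ`,
`(⨍_{B_U} ‖u‖_V^q du)^{1/q} ≥ (n/(n+q))^{1/q}·(|B_U|/|B_V|)^{1/n}`. -/
theorem statement16 (n : ℕ) (hn : 0 < n) (q : ℝ) (hq : 0 < q)
    (NU NV : EuclideanSpace ℝ (Fin n) → ℝ) (hNU : IsNorm NU) (hNV : IsNorm NV) :
    ((volume {u : EuclideanSpace ℝ (Fin n) | NU u ≤ 1}).toReal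
        / (volume {v : EuclideanSpace ℝ (Fin n) | NV v ≤ 1}).toReal) ^ ((1 : ℝ) / n)
      * ((n : ℝ) / ((n : ℝ) + q)) ^ (1 / q)
      ≤ (⨍ u in {u : EuclideanSpace ℝ (Fin n) | NU u ≤ 1}, NV u ^ q) ^ (1 / q) := by
  set A := volume.real {u : EuclideanSpace ℝ (Fin n) | NU u ≤ 1}
  set B := volume.real {v : EuclideanSpace ℝ (Fin n) | NV v ≤ 1}
  have hA : 0 < A := hNU.measureReal_sublevel_pos volume one_pos
  have hB : 0 < B := hNV.measureReal_sublevel_pos volume one_pos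
  set s := (A / B) ^ ((1 : ℝ) / n)
  have hs : 0 < s := by positivity
  have hBs : B * s ^ n = A := by
    rw [← Real.rpow_natCast, ← Real.rpow_mul (by positivity), one_div_mul_cancel (by positivity),
      Real.rpow_one, mul_div_cancel₀ _ hB.ne']
  have hint : A * s ^ q * (n / (n + q)) ≤ ∫ u in {u | NU u ≤ 1}, NV u ^ q :=
    mul_rpow_mul_le_integral_rpow_of_le_measure_lt (ae_of_all _ hNV.nonneg)
      hNV.continuous.aemeasurable
      ((hNV.continuous.rpow_const fun _ => Or.inr hq.le).continuousOn.integrableOn_compact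
        (hNU.isCompact_sublevel 1)) hq hB.le hs.le hBs fun t ht => by
      simpa only [finrank_euclideanSpace_fin] using
        hNU.ofReal_sub_le_restrict_measure_lt volume hNV ht.1
  have havg : s ^ q * (n / (n + q)) ≤ ⨍ u in {u | NU u ≤ 1}, NV u ^ q := by
    rw [setAverage_eq, smul_eq_mul, le_inv_mul_iff₀ hA]
    linarith
  calc s * (n / (n + q)) ^ (1 / q) = (s ^ q * (n / (n + q))) ^ (1 / q) := by
        rw [Real.mul_rpow (by positivity) (by positivity), ← Real.rpow_mul hs.le,
          mul_one_div_cancel hq.ne', Real.rpow_one]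
    _ ≤ _ := Real.rpow_le_rpow (by positivity) havg (by positivity)
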